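/- arXiv:2303.01453 — 3 statements merged into one kernel-verified Lean document; each statement's English description precedes it below -/
import Mathlib

section
/- Let n, T ≥ 1 be integers, η > 0 a real learning rate, and ℓ_t ∈ [0,1]^n loss vectors for t = 1,…,T. Define exponential weights w_1(i) = 1 and w_{t+1}(i) = w_t(i)·exp(−η·ℓ_t(i)), and probability vectors p_t(i) = w_t(i) / Σ_{j=1}^n w_t(j). Then Σ_{t=1}^T ⟨p_t, ℓ_t⟩ − min_{i ∈ [n]} Σ_{t=1}^T ℓ_t(i) ≤ (log n)/η + η·T. -/
open Finset Real

lemma exp_neg_le_quad {x : ℝ} (hx : 0 ≤ x) : Real.exp (-x) ≤ 1 - x + x ^ 2 := by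
  have h1 : 1 + x ≤ Real.exp x := by linarith [Real.add_one_le_exp x]
  have h2 : Real.exp (-x) * Real.exp x = 1 := by
    rw [← Real.exp_add]; simp
  have h3 : (0:ℝ) < Real.exp x := Real.exp_pos x
  nlinarith [Real.exp_pos (-x), sq_nonneg x, mul_pos (Real.exp_pos (-x)) h3]

open Finset in
theorem mwu_expected_regret
    (n T : ℕ) (hn : 1 ≤ n) (hT : 1 ≤ T) (η : ℝ) (hη : 0 < η)
    (ℓ : ℕ → Fin n → ℝ)
    (hℓ : ∀ t ∈ Finset.range T, ∀ i, ℓ t i ∈ Set.Icc (0 : ℝ) 1)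
    (w p : ℕ → Fin n → ℝ)
    (hw0 : ∀ i, w 0 i = 1)
    (hw : ∀ t i, w (t + 1) i = w t i * Real.exp (-η * ℓ t i))
    (hp : ∀ t i, p t i = w t i / ∑ j, w t j) :
    ∑ t ∈ Finset.range T, ∑ i, p t i * ℓ t i -
      Finset.univ.inf' (Finset.univ_nonempty_iff.mpr ⟨⟨0, hn⟩⟩)
        (fun i => ∑ t ∈ Finset.range T, ℓ t i)
      ≤ Real.log n / η + η * T := by
  -- closed form for w
  have hwc : ∀ t i, w t i = Real.exp (-η * ∑ s ∈ Finset.range t, ℓ s i) := by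
    intro t
    induction t with
    | zero => intro i; simp [hw0]
    | succ t ih =>
      intro i
      rw [hw, ih, ← Real.exp_add, Finset.sum_range_succ]
      ring_nf
  have hwpos : ∀ t i, 0 < w t i := fun t i => hwc t i ▸ Real.exp_pos _
  set W : ℕ → ℝ := fun t => ∑ j, w t j with hW
  have hWpos : ∀ t, 0 < W t := fun t =>
    Finset.sum_pos (fun j _ => hwpos t j) (Finset.univ_nonempty_iff.mpr ⟨⟨0, hn⟩⟩)
  -- step bound
  have hstep : ∀ t ∈ Finset.range T,
      W (t + 1) ≤ W t * Real.exp (-η * (∑ i, p t i * ℓ t i) + η ^ 2) := by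
    intro t ht
    have key : W (t + 1) ≤ W t * (1 - η * (∑ i, p t i * ℓ t i) + η ^ 2) := by
      have h1 : W (t + 1) = ∑ i, w t i * Real.exp (-η * ℓ t i) := by
        simp only [hW, hw]
      rw [h1]
      have h2 : ∀ i : Fin n, w t i * Real.exp (-η * ℓ t i)
          ≤ w t i * (1 - η * ℓ t i + η ^ 2 * ℓ t i) := by
        intro i
        apply mul_le_mul_of_nonneg_left _ (hwpos t i).le
        obtain ⟨h0, h1'⟩ := hℓ t ht i
        calc Real.exp (-η * ℓ t i) = Real.exp (-(η * ℓ t i)) := by ring_nf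
          _ ≤ 1 - η * ℓ t i + (η * ℓ t i) ^ 2 :=
              exp_neg_le_quad (mul_nonneg hη.le h0)
          _ ≤ 1 - η * ℓ t i + η ^ 2 * ℓ t i := by
              nlinarith [mul_nonneg (mul_nonneg (sq_nonneg η) h0) (sub_nonneg.mpr h1')]
      calc ∑ i, w t i * Real.exp (-η * ℓ t i)
          ≤ ∑ i, w t i * (1 - η * ℓ t i + η ^ 2 * ℓ t i) :=
            Finset.sum_le_sum (fun i _ => h2 i)
        _ = W t - η * (∑ i, w t i * ℓ t i) + η ^ 2 * (∑ i, w t i * ℓ t i) := by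
            simp only [hW]
            rw [Finset.mul_sum, Finset.mul_sum, ← Finset.sum_sub_distrib,
              ← Finset.sum_add_distrib]
            exact Finset.sum_congr rfl fun i _ => by ring
        _ ≤ W t * (1 - η * (∑ i, p t i * ℓ t i) + η ^ 2) := by
            have hpw : ∀ i, p t i = w t i / W t := fun i => hp t i
            have hsum : ∑ i, p t i * ℓ t i = (∑ i, w t i * ℓ t i) / W t := by
              rw [Finset.sum_div]
              exact Finset.sum_congr rfl (fun i _ => by rw [hpw i]; ring)
            have hwl : ∑ i, w t i * ℓ t i ≤ W t := by
              simp only [hW]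
              apply Finset.sum_le_sum
              intro i _
              obtain ⟨h0, h1'⟩ := hℓ t ht i
              nlinarith [hwpos t i]
            have hWp := hWpos t
            have heq : W t * (1 - η * ((∑ i, w t i * ℓ t i) / W t) + η ^ 2)
                = W t - η * (∑ i, w t i * ℓ t i) + η ^ 2 * W t := by
              field_simp
            rw [hsum, heq]
            nlinarith [sq_nonneg η]
    calc W (t + 1) ≤ W t * (1 - η * (∑ i, p t i * ℓ t i) + η ^ 2) := key
      _ ≤ W t * Real.exp (-η * (∑ i, p t i * ℓ t i) + η ^ 2) := by
          apply mul_le_mul_of_nonneg_left _ (hWpos t).le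
          have := Real.add_one_le_exp (-η * (∑ i, p t i * ℓ t i) + η ^ 2)
          linarith
  -- telescoped bound
  have hWT : W T ≤ W 0 * Real.exp (∑ t ∈ Finset.range T,
      (-η * (∑ i, p t i * ℓ t i) + η ^ 2)) := by
    have : ∀ m ≤ T, W m ≤ W 0 * Real.exp (∑ t ∈ Finset.range m,
        (-η * (∑ i, p t i * ℓ t i) + η ^ 2)) := by
      intro m
      induction m with
      | zero => intro _; simp
      | succ m ih =>
        intro hm
        have hmT : m < T := hm
        have hm' : m ≤ T := hmT.le
        calc W (m + 1) ≤ W m * Real.exp (-η * (∑ i, p m i * ℓ m i) + η ^ 2) :=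
              hstep m (Finset.mem_range.mpr hmT)
          _ ≤ (W 0 * Real.exp (∑ t ∈ Finset.range m,
                (-η * (∑ i, p t i * ℓ t i) + η ^ 2))) *
                Real.exp (-η * (∑ i, p m i * ℓ m i) + η ^ 2) := by
              apply mul_le_mul_of_nonneg_right (ih hm') (Real.exp_pos _).le
          _ = W 0 * Real.exp (∑ t ∈ Finset.range (m + 1),
                (-η * (∑ i, p t i * ℓ t i) + η ^ 2)) := by
              rw [Finset.sum_range_succ, Real.exp_add, mul_assoc, ← Real.exp_add, ← Real.exp_add]
    exact this T le_rfl
  have hW0 : W 0 = n := by simp [hW, hw0]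
  -- minimizer
  obtain ⟨i0, _, hi0⟩ := Finset.exists_mem_eq_inf' (Finset.univ_nonempty_iff.mpr ⟨⟨0, hn⟩⟩)
    (fun i => ∑ t ∈ Finset.range T, ℓ t i)
  rw [hi0]
  -- lower bound on W T
  have hlow : w T i0 ≤ W T := Finset.single_le_sum (fun j _ => (hwpos T j).le)
    (Finset.mem_univ i0)
  rw [hwc T i0] at hlow
  -- take logs
  have hlog : -η * ∑ t ∈ Finset.range T, ℓ t i0 ≤
      Real.log n + (∑ t ∈ Finset.range T, (-η * (∑ i, p t i * ℓ t i) + η ^ 2)) := by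
    have h1 := Real.log_le_log (Real.exp_pos _) (hlow.trans hWT)
    rw [Real.log_exp] at h1
    rw [hW0] at h1
    have h2 : Real.log ((n : ℝ) * Real.exp (∑ t ∈ Finset.range T,
        (-η * (∑ i, p t i * ℓ t i) + η ^ 2))) =
        Real.log n + (∑ t ∈ Finset.range T, (-η * (∑ i, p t i * ℓ t i) + η ^ 2)) := by
      rw [Real.log_mul (by positivity) (Real.exp_ne_zero _), Real.log_exp]
    linarith [h1.trans_eq h2]
  have hsumsplit : ∑ t ∈ Finset.range T, (-η * (∑ i, p t i * ℓ t i) + η ^ 2) =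
      -η * (∑ t ∈ Finset.range T, ∑ i, p t i * ℓ t i) + η ^ 2 * T := by
    rw [Finset.sum_add_distrib, ← Finset.mul_sum]
    simp [mul_comm]
  rw [hsumsplit] at hlog
  rw [div_add' _ _ _ hη.ne', le_div_iff₀ hη]
  nlinarith [hlog]
end

section
/- Let n, T ≥ 1 be integers, ε ≥ 0, T₀ ≥ 0, N ≥ 0 reals, and let ℓ_t : [n] → [0,1] be loss functions for t = 1,…,T. Write L_e(I) = Σ_{t∈I} ℓ_t(e) for an expert e and a set of days I ⊆ [T]. Fix an expert e*, let I_1,…,I_r be sets of days partitioning [T], let e_1,…,e_r be experts, and let M ⊆ [r] be a set of 'marked' indices. Suppose that (i) for every unmarked j ∉ M, L_{e_j}(I_j) ≤ (1+ε)·L_{e*}(I_j); (ii) for every marked j ∈ M, |I_j| ≤ T₀; and (iii) |M| ≤ N. Then Σ_{j=1}^r L_{e_j}(I_j) − L_{e*}([T]) ≤ ε·T + N·T₀. -/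
open Finset in
theorem synthetic_algorithm_regret
    (n T : ℕ) (hn : 1 ≤ n) (hT : 1 ≤ T)
    (ε T₀ N : ℝ) (hε : 0 ≤ ε) (hT₀ : 0 ≤ T₀) (hN : 0 ≤ N)
    (ℓ : Fin T → Fin n → ℝ)
    (hℓ : ∀ t i, ℓ t i ∈ Set.Icc (0 : ℝ) 1)
    (estar : Fin n)
    (r : ℕ)
    (I : Fin r → Finset (Fin T))
    (hdisj : ∀ j j' : Fin r, j ≠ j' → Disjoint (I j) (I j'))
    (hcover : Finset.univ.biUnion I = (Finset.univ : Finset (Fin T)))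
    (e : Fin r → Fin n)
    (M : Finset (Fin r))
    (hunmarked : ∀ j : Fin r, j ∉ M →
      ∑ t ∈ I j, ℓ t (e j) ≤ (1 + ε) * ∑ t ∈ I j, ℓ t estar)
    (hmarked : ∀ j ∈ M, ((I j).card : ℝ) ≤ T₀)
    (hM : (M.card : ℝ) ≤ N) :
    (∑ j : Fin r, ∑ t ∈ I j, ℓ t (e j)) - ∑ t : Fin T, ℓ t estar
      ≤ ε * T + N * T₀ := by
  set S : Fin r → ℝ := fun j => ∑ t ∈ I j, ℓ t estar with hS
  have hS0 : ∀ j, 0 ≤ S j := fun j =>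
    Finset.sum_nonneg fun t _ => (hℓ t estar).1
  have htot : ∑ t : Fin T, ℓ t estar = ∑ j : Fin r, S j := by
    rw [← hcover, Finset.sum_biUnion]
    intro a _ b _ hab
    exact hdisj a b hab
  have hLstar : ∑ j : Fin r, S j ≤ (T : ℝ) := by
    rw [← htot]
    calc ∑ t : Fin T, ℓ t estar ≤ ∑ _t : Fin T, (1 : ℝ) :=
          Finset.sum_le_sum fun t _ => (hℓ t estar).2
      _ = T := by simp
  -- split over M
  have hsplit : ∀ (f : Fin r → ℝ),
      ∑ j : Fin r, f j = ∑ j ∈ M, f j + ∑ j ∈ Mᶜ, f j := by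
    intro f
    rw [← Finset.sum_add_sum_compl M f]
  have hA : ∑ j : Fin r, ∑ t ∈ I j, ℓ t (e j)
      ≤ ∑ j ∈ M, T₀ + ∑ j ∈ Mᶜ, (1 + ε) * S j := by
    rw [hsplit (fun j => ∑ t ∈ I j, ℓ t (e j))]
    apply add_le_add
    · apply Finset.sum_le_sum
      intro j hj
      calc ∑ t ∈ I j, ℓ t (e j) ≤ ∑ _t ∈ I j, (1 : ℝ) :=
            Finset.sum_le_sum fun t _ => (hℓ t (e j)).2
        _ = (I j).card := by simp
        _ ≤ T₀ := hmarked j hj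
    · exact Finset.sum_le_sum fun j hj => hunmarked j (Finset.mem_compl.mp hj)
  have hB : ∑ j ∈ Mᶜ, (1 + ε) * S j - ∑ j : Fin r, S j
      ≤ ε * ∑ j : Fin r, S j := by
    have h1 : ∑ j ∈ Mᶜ, (1 + ε) * S j ≤ ∑ j : Fin r, (1 + ε) * S j := by
      apply Finset.sum_le_sum_of_subset_of_nonneg (Finset.subset_univ _)
      intro j _ _
      exact mul_nonneg (by linarith) (hS0 j)
    have h2 : ∑ j : Fin r, (1 + ε) * S j = ∑ j : Fin r, S j + ε * ∑ j : Fin r, S j := by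
      rw [← Finset.mul_sum]; ring
    linarith
  have hC : ∑ j ∈ M, (T₀ : ℝ) ≤ N * T₀ := by
    rw [Finset.sum_const, nsmul_eq_mul]
    exact mul_le_mul_of_nonneg_right hM hT₀
  have hεL : ε * ∑ j : Fin r, S j ≤ ε * T := mul_le_mul_of_nonneg_left hLstar hε
  rw [htot]
  linarith
end

section
/- Let T₁ ≥ 1 be an integer, let R₁, R₂, R₃ ≥ 0 be reals, and let A, B, S, E : [T₁] → ℝ be sequences. Define the truncation tl(x, b) = max(x − b, −R₂). Suppose: (i) for every i, S(i) ≤ E(i) + R₃; (ii) for every i, B(i) ≤ E(i) + R₂; and (iii) Σ_{i=1}^{T₁} tl(A(i), B(i)) ≤ Σ_{i=1}^{T₁} tl(S(i), B(i)) + R₁·max(R₂, R₃). Then Σ_{i=1}^{T₁} A(i) ≤ Σ_{i=1}^{T₁} E(i) + R₁·max(R₂, R₃) + T₁·R₃. -/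
open Finset in
theorem bootstrap_regret_accounting
    (T₁ : ℕ) (hT₁ : 1 ≤ T₁)
    (R₁ R₂ R₃ : ℝ) (hR₁ : 0 ≤ R₁) (hR₂ : 0 ≤ R₂) (hR₃ : 0 ≤ R₃)
    (A B S E : Fin T₁ → ℝ)
    (hS : ∀ i, S i ≤ E i + R₃)
    (hB : ∀ i, B i ≤ E i + R₂)
    (hALG1 : ∑ i : Fin T₁, max (A i - B i) (-R₂) ≤
      (∑ i : Fin T₁, max (S i - B i) (-R₂)) + R₁ * max R₂ R₃) :
    ∑ i : Fin T₁, A i ≤ (∑ i : Fin T₁, E i) + R₁ * max R₂ R₃ + T₁ * R₃ := by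
  have h1 : ∑ i : Fin T₁, A i ≤ ∑ i : Fin T₁, (max (A i - B i) (-R₂) + B i) := by
    apply Finset.sum_le_sum
    intro i _
    have := le_max_left (A i - B i) (-R₂)
    linarith
  have h2 : ∀ i : Fin T₁, max (S i - B i) (-R₂) + B i ≤ E i + R₃ := by
    intro i
    rcases max_cases (S i - B i) (-R₂) with ⟨h, _⟩ | ⟨h, _⟩
    · have := hS i; linarith [h ▸ le_refl (max (S i - B i) (-R₂))]
    · have := hB i; linarith
  have h3 : ∑ i : Fin T₁, (max (S i - B i) (-R₂) + B i) ≤ ∑ i : Fin T₁, (E i + R₃) :=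
    Finset.sum_le_sum fun i _ => h2 i
  have h4 : ∑ i : Fin T₁, (E i + R₃) = (∑ i : Fin T₁, E i) + T₁ * R₃ := by
    rw [Finset.sum_add_distrib, Finset.sum_const, Finset.card_univ, Fintype.card_fin,
      nsmul_eq_mul]
  rw [Finset.sum_add_distrib] at h1 h3
  linarith
end
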